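/- Let n be a positive integer, γ > 0, d > 0, and h ≥ 0. Let (X, Y, C) be jointly distributed random variables on finite sets such that X is uniform over a multiset of at most 2⁹·n/γ³ elements. Suppose (i) there exists a probability distribution D such that Δ(P_{Y|X=x}, D) ≤ d for every x ∈ supp(X), and (ii) I((X,Y); C) ≤ h. Then I(X; (Y,C)) ≤ max{1 + h, 13 + h + log₂(n·d²/γ³)}, where all mutual informations are measured in bits. -/

import Mathlib

/-- Mutual information (in bits) of a joint pmf `q` on a product of finite sets. -/
noncomputable def mutualInfo {γ β : Type*} [Fintype γ] [Fintype β] (q : γ → β → ℝ) : ℝ :=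
  ∑ v, ∑ b,
    if q v b = 0 then 0 else
      q v b * Real.logb 2 (q v b / ((∑ b', q v b') * (∑ v', q v' b)))


lemma mutualInfo_eq {γ β : Type*} [Fintype γ] [Fintype β] (q : γ → β → ℝ) :
    mutualInfo q = ∑ v, ∑ b,
      q v b * Real.logb 2 (q v b / ((∑ b', q v b') * (∑ v', q v' b))) := by
  unfold mutualInfo
  refine Finset.sum_congr rfl fun v _ => Finset.sum_congr rfl fun b _ => ?_
  by_cases h : q v b = 0 <;> simp [h]

lemma gibbs {γ β : Type*} [Fintype γ] [Fintype β] (q : γ → β → ℝ)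
    (h0 : ∀ v b, 0 ≤ q v b) (h1 : ∑ v, ∑ b, q v b = 1) : 0 ≤ mutualInfo q := by
  rw [mutualInfo_eq]
  have hln2 : 0 < Real.log 2 := Real.log_pos one_lt_two
  have key : ∀ v b, (q v b - (∑ b', q v b') * (∑ v', q v' b)) / Real.log 2
      ≤ q v b * Real.logb 2 (q v b / ((∑ b', q v b') * (∑ v', q v' b))) := by
    intro v b
    set r := ∑ b', q v b' with hr
    set c := ∑ v', q v' b with hc
    have hrc : 0 ≤ r * c := mul_nonneg (Finset.sum_nonneg fun _ _ => h0 _ _)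
      (Finset.sum_nonneg fun _ _ => h0 _ _)
    rcases eq_or_lt_of_le (h0 v b) with hq | hq
    · rw [← hq, zero_mul]
      apply div_nonpos_of_nonpos_of_nonneg (by linarith) hln2.le
    · have hrpos : 0 < r := lt_of_lt_of_le hq (Finset.single_le_sum (fun b' _ => h0 v b') (Finset.mem_univ b))
      have hcpos : 0 < c := lt_of_lt_of_le hq (Finset.single_le_sum (fun v' _ => h0 v' b) (Finset.mem_univ v))
      have hrcpos : 0 < r * c := mul_pos hrpos hcpos
      have hlog : 1 - (r * c) / q v b ≤ Real.log (q v b / (r * c)) := by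
        have h2 := Real.log_le_sub_one_of_pos (show 0 < (r * c) / q v b from div_pos hrcpos hq)
        have hinv : Real.log ((r * c) / q v b) = - Real.log (q v b / (r * c)) := by
          rw [← Real.log_inv]
          congr 1
          rw [inv_div]
        rw [hinv] at h2
        linarith
      have step : q v b - r * c ≤ q v b * Real.log (q v b / (r * c)) := by
        have := mul_le_mul_of_nonneg_left hlog hq.le
        have hne : q v b ≠ 0 := ne_of_gt hq
        calc q v b - r * c = q v b * (1 - (r * c) / q v b) := by field_simp
          _ ≤ q v b * Real.log (q v b / (r * c)) := this
      calc (q v b - r * c) / Real.log 2 ≤ (q v b * Real.log (q v b / (r * c))) / Real.log 2 := by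
            gcongr
        _ = q v b * Real.logb 2 (q v b / (r * c)) := by rw [Real.logb]; ring
  have hsum : (0:ℝ) = (∑ v, ∑ b, (q v b - (∑ b', q v b') * (∑ v', q v' b))) / Real.log 2 := by
    have e1 : ∑ v, ∑ b, (q v b - (∑ b', q v b') * (∑ v', q v' b))
        = (∑ v, ∑ b, q v b) - ∑ v, ∑ b, (∑ b', q v b') * (∑ v', q v' b) := by
      rw [← Finset.sum_sub_distrib]
      refine Finset.sum_congr rfl fun v _ => by rw [← Finset.sum_sub_distrib]
    have e2 : ∑ v, ∑ b, (∑ b', q v b') * (∑ v', q v' b)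
        = (∑ v, ∑ b', q v b') * (∑ b, ∑ v', q v' b) := by
      rw [Finset.sum_mul]
      refine Finset.sum_congr rfl fun v _ => by rw [Finset.mul_sum]
    have e3 : (∑ b, ∑ v', q v' b) = 1 := by rw [Finset.sum_comm]; exact h1
    rw [e1, e2, e3, h1]
    norm_num
  calc (0:ℝ) = _ := hsum
    _ = ∑ v, ∑ b, (q v b - (∑ b', q v b') * (∑ v', q v' b)) / Real.log 2 := by
        rw [Finset.sum_div]
        exact Finset.sum_congr rfl fun v _ => by rw [Finset.sum_div]
    _ ≤ _ := Finset.sum_le_sum fun v _ => Finset.sum_le_sum fun b _ => key v b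

lemma chord (M a g : ℝ) (hM : 2 ≤ M) (ha : 0 ≤ a) (hg : 0 ≤ g) (hag : a ≤ M * g) :
    a * Real.logb 2 (a / g) ≤ (M * Real.logb 2 M / (M - 1)) * max (a - g) 0 := by
  have hln2 : 0 < Real.log 2 := Real.log_pos one_lt_two
  have hM1 : (0:ℝ) < M - 1 := by linarith
  have hM1' : M - 1 ≠ 0 := ne_of_gt hM1
  have hcoef : 0 ≤ M * Real.logb 2 M / (M - 1) := by
    apply div_nonneg _ hM1.le
    exact mul_nonneg (by linarith) (Real.logb_nonneg one_lt_two (by linarith))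
  rcases le_or_gt a g with hga | hga
  · rw [max_eq_right (by linarith), mul_zero]
    rcases eq_or_lt_of_le hg with hg0 | hg0
    · rw [← hg0] at hga
      have : a = 0 := le_antisymm (by linarith) ha
      simp [this]
    · have hlog : Real.logb 2 (a / g) ≤ 0 :=
        Real.logb_nonpos one_lt_two (by positivity) ((div_le_one hg0).2 hga)
      exact mul_nonpos_iff.2 (Or.inl ⟨ha, hlog⟩)
  · have hg0 : 0 < g := by
      rcases eq_or_lt_of_le hg with hg0 | hg0
      · exfalso; rw [← hg0] at hag; simp at hag; nlinarith
      · exact hg0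
    have hgne : g ≠ 0 := ne_of_gt hg0
    rw [max_eq_left (by linarith)]
    set u := a / g with hu
    have hu1 : 1 < u := (one_lt_div hg0).2 hga
    have huM : u ≤ M := by rw [hu, div_le_iff₀ hg0]; linarith [hag]
    set lam := (M - u) / (M - 1) with hlam
    set mu := (u - 1) / (M - 1) with hmu
    have hlam0 : 0 ≤ lam := div_nonneg (by linarith) hM1.le
    have hmu0 : 0 ≤ mu := div_nonneg (by linarith) hM1.le
    have hlm : lam + mu = 1 := by rw [hlam, hmu]; field_simp; ring
    have hcomb : lam • (1:ℝ) + mu • M = u := by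
      rw [smul_eq_mul, smul_eq_mul, hlam, hmu]
      field_simp
      ring
    have hconv := Real.convexOn_mul_log.2 (Set.mem_Ici.2 (zero_le_one))
      (Set.mem_Ici.2 (by linarith : (0:ℝ) ≤ M)) hlam0 hmu0 hlm
    rw [hcomb] at hconv
    simp only [smul_eq_mul, Real.log_one, mul_zero, mul_one] at hconv
    have hstep : u * Real.log u ≤ (u - 1) / (M - 1) * (M * Real.log M) := by
      calc u * Real.log u ≤ 0 + mu * (M * Real.log M) := hconv
        _ = (u - 1) / (M - 1) * (M * Real.log M) := by rw [hmu]; ring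
    have key : a * Real.log (a / g) ≤ (a - g) * (M * Real.log M) / (M - 1) := by
      have h2 := mul_le_mul_of_nonneg_left hstep hg0.le
      calc a * Real.log (a / g) = g * (u * Real.log u) := by
            rw [hu]; field_simp; try ring
        _ ≤ g * ((u - 1) / (M - 1) * (M * Real.log M)) := h2
        _ = (a - g) * (M * Real.log M) / (M - 1) := by
            rw [hu]; field_simp; try ring
    have key2 : a * Real.log (a / g) / Real.log 2
        ≤ ((a - g) * (M * Real.log M) / (M - 1)) / Real.log 2 := by gcongr
    calc a * Real.logb 2 (a / g) = a * Real.log (a / g) / Real.log 2 := by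
          rw [Real.logb]; ring
      _ ≤ ((a - g) * (M * Real.log M) / (M - 1)) / Real.log 2 := key2
      _ = (M * (Real.log M / Real.log 2) / (M - 1)) * (a - g) := by ring
      _ = (M * Real.logb 2 M / (M - 1)) * (a - g) := by rw [Real.logb]

lemma tangent_log {x a : ℝ} (hx : 0 < x) (ha : 0 < a) :
    Real.log x ≤ x / a + Real.log a - 1 := by
  have h := Real.log_le_sub_one_of_pos (show 0 < x / a from div_pos hx ha)
  rw [Real.log_div (ne_of_gt hx) (ne_of_gt ha)] at h
  linarith

lemma log3_ub : Real.log 3 ≤ 1.1022207712 := by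
  have h98 : Real.log (9/8) ≤ 1/8 := by
    have := Real.log_le_sub_one_of_pos (show (0:ℝ) < 9/8 by norm_num)
    linarith
  have hid : Real.log (9/8) = 2 * Real.log 3 - 3 * Real.log 2 := by
    rw [show (9/8:ℝ) = 3^2/2^3 by norm_num, Real.log_div (by norm_num) (by norm_num),
      Real.log_pow, Real.log_pow]
    push_cast; ring
  have l2 := Real.log_two_lt_d9
  nlinarith [l2]

lemma m3_cond : Real.logb 2 3 + 2 * Real.logb 2 (Real.logb 2 3) ≤ 3 := by
  have l2lo := Real.log_two_gt_d9
  have l2hi := Real.log_two_lt_d9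
  have l2pos : 0 < Real.log 2 := Real.log_pos one_lt_two
  set t := Real.logb 2 3 with ht
  have tpos : 0 < t := Real.logb_pos one_lt_two (by norm_num)
  have tl2 : t * Real.log 2 = Real.log 3 := by
    rw [ht, Real.logb]; field_simp
  have tub : t ≤ 1.59016845 := by
    rw [ht, Real.logb, div_le_iff₀ l2pos]
    nlinarith [log3_ub, l2lo]
  have h54 : 2 * Real.log (5/4) ≤ Real.log 2 - 7/32 := by
    have h2532 : Real.log (25/32) ≤ -(7/32) := by
      have := Real.log_le_sub_one_of_pos (show (0:ℝ) < 25/32 by norm_num)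
      linarith
    have hid : Real.log (25/32) = 2 * Real.log (5/4) - Real.log 2 := by
      rw [show (25/32:ℝ) = (5/4)^2/2 by norm_num, Real.log_div (by positivity) (by norm_num),
        Real.log_pow]
      push_cast; ring
    linarith [hid ▸ h2532]
  -- log t ≤ (5/8) t + log(8/5) - 1, log(8/5) = log 2 - log (5/4) ≤ log 2 - (log2 - 7/32)/2 ...
  have hlogt : Real.log t ≤ (5/8) * t + Real.log (8/5) - 1 := by
    have := tangent_log tpos (show (0:ℝ) < 8/5 by norm_num)
    linarith [this]
  have h85 : Real.log (8/5) = Real.log 2 - Real.log (5/4) := by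
    rw [show (8/5:ℝ) = 2/(5/4) by norm_num, Real.log_div (by norm_num) (by norm_num)]
  have h54lo : Real.log (5/4) ≥ 1/5 := by
    have := Real.log_le_sub_one_of_pos (show (0:ℝ) < 4/5 by norm_num)
    have hinv : Real.log (4/5) = - Real.log (5/4) := by
      rw [← Real.log_inv]; norm_num
    linarith [hinv ▸ this]
  -- goal: t + 2 * logb 2 t ≤ 3
  have hgoal : t * Real.log 2 + 2 * Real.log t ≤ 3 * Real.log 2 := by
    nlinarith [log3_ub, hlogt, h85, h54lo, tub, l2lo, l2hi, tl2]
  have hlb : Real.logb 2 t = Real.log t / Real.log 2 := rfl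
  rw [hlb, ← mul_le_mul_iff_of_pos_right l2pos]
  calc (t + 2 * (Real.log t / Real.log 2)) * Real.log 2
      = t * Real.log 2 + 2 * Real.log t := by field_simp
    _ ≤ 3 * Real.log 2 := hgoal

lemma m5_cond {L c : ℝ} (hL : 0 < L) (hc : 0 < c) (hc5 : c ≤ 5/2 * L) :
    2 * Real.logb 2 c ≤ L + 3 := by
  have l2lo := Real.log_two_gt_d9
  have l2pos : 0 < Real.log 2 := Real.log_pos one_lt_two
  have hlogc : Real.log c ≤ Real.log (5/2) + Real.log L :=
    (Real.log_le_log hc hc5).trans (by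
      rw [Real.log_mul (by norm_num) (ne_of_gt hL)])
  have hlogL : Real.log L ≤ L/3 + Real.log 3 - 1 := tangent_log hL (by norm_num)
  have h52 : Real.log (5/2) = Real.log 2 + Real.log (5/4) := by
    rw [show (5/2:ℝ) = 2 * (5/4) by norm_num, Real.log_mul (by norm_num) (by norm_num)]
  have h54 : 2 * Real.log (5/4) ≤ Real.log 2 - 7/32 := by
    have h2532 : Real.log (25/32) ≤ -(7/32) := by
      have := Real.log_le_sub_one_of_pos (show (0:ℝ) < 25/32 by norm_num)
      linarith
    have hid : Real.log (25/32) = 2 * Real.log (5/4) - Real.log 2 := by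
      rw [show (25/32:ℝ) = (5/4)^2/2 by norm_num, Real.log_div (by positivity) (by norm_num),
        Real.log_pow]
      push_cast; ring
    linarith [hid ▸ h2532]
  have l3ub := log3_ub
  rw [show Real.logb 2 c = Real.log c / Real.log 2 from rfl, ← mul_le_mul_iff_of_pos_right l2pos]
  have expand : (2 * (Real.log c / Real.log 2)) * Real.log 2 = 2 * Real.log c := by
    field_simp
  rw [expand]
  -- need: 2 log c ≤ (L+3) log 2
  nlinarith [hlogc, hlogL, h52, h54, l3ub, l2lo, hL]

lemma logb_two_four : Real.logb 2 4 = 2 := by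
  have h4 : Real.log 4 = 2 * Real.log 2 := by
    rw [show (4:ℝ) = 2^(2:ℕ) by norm_num, Real.log_pow]; push_cast; ring
  rw [Real.logb, h4]
  field_simp [ne_of_gt (Real.log_pos one_lt_two)]

lemma concave_endpoint {c d L : ℝ} (hd0 : 0 < d) (hd4 : d ≤ 1/4) (hcd : 1 < c * d)
    (hA : 1 + 2 * Real.logb 2 c ≤ L + 4) (hB : c ≤ 4 * L) :
    c * d ≤ L + 4 + 2 * Real.logb 2 d := by
  have hc4 : 4 < c := by nlinarith
  have hc0 : 0 < c := by linarith
  have ha0 : 0 < 1/c := by positivity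
  have had : 1/c < d := by rw [div_lt_iff₀ hc0]; linarith [mul_comm c d ▸ hcd]
  have hab : 1/c < 1/4 := by rw [div_lt_div_iff₀ hc0 (by norm_num)]; linarith
  set a := 1/c with hadef
  set lam := (1/4 - d) / (1/4 - a) with hlam
  set mu := (d - a) / (1/4 - a) with hmu
  have hden : 0 < 1/4 - a := by linarith
  have hlam0 : 0 ≤ lam := div_nonneg (by linarith) hden.le
  have hmu0 : 0 ≤ mu := div_nonneg (by linarith) hden.le
  have hsum : lam + mu = 1 := by
    rw [hlam, hmu, ← add_div, div_eq_one_iff_eq (ne_of_gt hden)]; ring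
  have hcomb' : lam * a + mu * (1/4 : ℝ) = d := by
    rw [hlam, hmu, div_mul_eq_mul_div, div_mul_eq_mul_div, ← add_div,
      div_eq_iff (ne_of_gt hden)]
    ring
  have hcomb : lam • a + mu • (1/4 : ℝ) = d := by
    rw [smul_eq_mul, smul_eq_mul]; exact hcomb'
  have hconc := strictConcaveOn_log_Ioi.concaveOn.2 (Set.mem_Ioi.2 ha0)
    (Set.mem_Ioi.2 (show (0:ℝ) < 1/4 by norm_num)) hlam0 hmu0 hsum
  rw [hcomb] at hconc
  simp only [smul_eq_mul] at hconc
  have hln2 : 0 < Real.log 2 := Real.log_pos one_lt_two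
  have hlogb : lam * Real.logb 2 a + mu * Real.logb 2 (1/4 : ℝ) ≤ Real.logb 2 d := by
    rw [Real.logb, Real.logb, Real.logb]
    calc lam * (Real.log a / Real.log 2) + mu * (Real.log (1/4) / Real.log 2)
        = (lam * Real.log a + mu * Real.log (1/4)) / Real.log 2 := by ring
      _ ≤ Real.log d / Real.log 2 := by gcongr
  have e1 : Real.logb 2 a = - Real.logb 2 c := by
    rw [hadef, one_div, Real.logb_inv]
  have e2 : Real.logb 2 (1/4 : ℝ) = -2 := by
    rw [one_div, Real.logb_inv, logb_two_four]
  rw [e1, e2] at hlogb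
  have hd' : c * d = lam * (c * a) + mu * (c * (1/4)) := by
    calc c * d = c * (lam * a + mu * (1/4)) := by rw [hcomb']
      _ = lam * (c * a) + mu * (c * (1/4)) := by ring
  have hca : c * a = 1 := by rw [hadef]; field_simp
  calc c * d = lam * (c * a) + mu * (c * (1/4)) := hd'
    _ = lam * 1 + mu * (c/4) := by rw [hca]; ring
    _ ≤ lam * 1 + mu * (c/4) + 2 * (Real.logb 2 d - (lam * (-Real.logb 2 c) + mu * (-2))) := by
        nlinarith [hlogb]
    _ = lam * (1 + 2 * Real.logb 2 c) + mu * (c/4 + 4) + 2 * Real.logb 2 d := by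
        ring
    _ ≤ lam * (L + 4) + mu * (L + 4) + 2 * Real.logb 2 d := by
        have h1 : lam * (1 + 2 * Real.logb 2 c) ≤ lam * (L + 4) :=
          mul_le_mul_of_nonneg_left hA hlam0
        have h2 : mu * (c/4 + 4) ≤ mu * (L + 4) :=
          mul_le_mul_of_nonneg_left (by linarith) hmu0
        linarith
    _ = L + 4 + 2 * Real.logb 2 d := by
        have h3 : lam * (L+4) + mu * (L+4) = (lam+mu) * (L+4) := by ring
        rw [h3, hsum]; ring

lemma max_eq_half {z : ℝ} : max z 0 = (|z| + z) / 2 := by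
  rcases le_or_gt 0 z with h | h
  · rw [max_eq_left h, abs_of_nonneg h]; ring
  · rw [max_eq_right h.le, abs_of_neg h]; ring


lemma decomp {α β σ : Type*} [Fintype α] [Fintype β] [Fintype σ]
    (p : α → β → σ → ℝ) (hp0 : ∀ x y c, 0 ≤ p x y c)
    (hp1 : ∑ x, ∑ y, ∑ c, p x y c = 1) :
    mutualInfo (fun x (yc : β × σ) => p x yc.1 yc.2)
      ≤ (∑ x, ∑ y, (∑ c, p x y c) * Real.logb 2 ((∑ c, p x y c) /
          ((∑ y', ∑ c', p x y' c') * (∑ x', ∑ c', p x' y c'))))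
        + mutualInfo (fun (xy : α × β) c => p xy.1 xy.2 c) := by
  have H1 : mutualInfo (fun x (yc : β × σ) => p x yc.1 yc.2)
      = ∑ x, ∑ y, ∑ c, p x y c * Real.logb 2 (p x y c /
          ((∑ y', ∑ c', p x y' c') * (∑ x', p x' y c))) := by
    rw [mutualInfo_eq]
    refine Finset.sum_congr rfl fun x _ => ?_
    rw [Fintype.sum_prod_type]
    refine Finset.sum_congr rfl fun y _ => Finset.sum_congr rfl fun c _ => ?_
    rw [Fintype.sum_prod_type]
  have H2 : mutualInfo (fun (xy : α × β) c => p xy.1 xy.2 c)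
      = ∑ x, ∑ y, ∑ c, p x y c * Real.logb 2 (p x y c /
          ((∑ c', p x y c') * (∑ x', ∑ y', p x' y' c))) := by
    rw [mutualInfo_eq, Fintype.sum_prod_type]
    refine Finset.sum_congr rfl fun x _ => Finset.sum_congr rfl fun y _ => ?_
    refine Finset.sum_congr rfl fun c _ => ?_
    rw [Fintype.sum_prod_type]
  -- key pointwise identity
  have key : ∀ x y c, p x y c * Real.logb 2 (p x y c /
        ((∑ y', ∑ c', p x y' c') * (∑ x', p x' y c)))
      = p x y c * Real.logb 2 ((∑ c', p x y c') /
          ((∑ y', ∑ c', p x y' c') * (∑ x', ∑ c', p x' y c')))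
        + p x y c * Real.logb 2 (p x y c /
          ((∑ c', p x y c') * (∑ x', ∑ y', p x' y' c)))
        - p x y c * Real.logb 2 ((∑ x', p x' y c) /
          ((∑ x', ∑ c', p x' y c') * (∑ x', ∑ y', p x' y' c))) := by
    intro x y c
    by_cases hp : p x y c = 0
    · rw [hp]; ring
    · have hppos : 0 < p x y c := (hp0 x y c).lt_of_ne (Ne.symm hp)
      have hpXY : 0 < ∑ c', p x y c' :=
        lt_of_lt_of_le hppos (Finset.single_le_sum (fun c' _ => hp0 x y c') (Finset.mem_univ c))
      have hpX : 0 < ∑ y', ∑ c', p x y' c' :=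
        lt_of_lt_of_le hpXY (Finset.single_le_sum
          (fun y' _ => Finset.sum_nonneg fun c' _ => hp0 x y' c') (Finset.mem_univ y))
      have hpYC : 0 < ∑ x', p x' y c :=
        lt_of_lt_of_le hppos (Finset.single_le_sum (fun x' _ => hp0 x' y c) (Finset.mem_univ x))
      have hpY : 0 < ∑ x', ∑ c', p x' y c' :=
        lt_of_lt_of_le hpXY (Finset.single_le_sum
          (fun x' _ => Finset.sum_nonneg fun c' _ => hp0 x' y c') (Finset.mem_univ x))
      have hpC : 0 < ∑ x', ∑ y', p x' y' c := by
        have h1' : p x y c ≤ ∑ y', p x y' c :=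
          Finset.single_le_sum (fun y' _ => hp0 x y' c) (Finset.mem_univ y)
        have h2' : (∑ y', p x y' c) ≤ ∑ x', ∑ y', p x' y' c :=
          Finset.single_le_sum (fun x' _ => Finset.sum_nonneg fun y' _ => hp0 x' y' c)
            (Finset.mem_univ x)
        linarith
      rw [Real.logb_div hp (mul_ne_zero (ne_of_gt hpX) (ne_of_gt hpYC)),
        Real.logb_mul (ne_of_gt hpX) (ne_of_gt hpYC),
        Real.logb_div (ne_of_gt hpXY) (mul_ne_zero (ne_of_gt hpX) (ne_of_gt hpY)),
        Real.logb_mul (ne_of_gt hpX) (ne_of_gt hpY),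
        Real.logb_div hp (mul_ne_zero (ne_of_gt hpXY) (ne_of_gt hpC)),
        Real.logb_mul (ne_of_gt hpXY) (ne_of_gt hpC),
        Real.logb_div (ne_of_gt hpYC) (mul_ne_zero (ne_of_gt hpY) (ne_of_gt hpC)),
        Real.logb_mul (ne_of_gt hpY) (ne_of_gt hpC)]
      ring
  -- YC part is a mutual information, hence nonnegative
  have hYC : 0 ≤ ∑ x, ∑ y, ∑ c, p x y c * Real.logb 2 ((∑ x', p x' y c) /
      ((∑ x', ∑ c', p x' y c') * (∑ x', ∑ y', p x' y' c))) := by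
    have h0' : ∀ y c, 0 ≤ ∑ x, p x y c := fun y c => Finset.sum_nonneg fun x _ => hp0 x y c
    have h1' : ∑ y, ∑ c, ∑ x, p x y c = 1 := by
      calc ∑ y, ∑ c, ∑ x, p x y c = ∑ y, ∑ x, ∑ c, p x y c :=
            Finset.sum_congr rfl fun y _ => Finset.sum_comm
        _ = ∑ x, ∑ y, ∑ c, p x y c := Finset.sum_comm
        _ = 1 := hp1
    have hg := gibbs (fun y c => ∑ x, p x y c) h0' h1'
    rw [mutualInfo_eq] at hg
    calc (0:ℝ) ≤ ∑ y, ∑ c, (∑ x, p x y c) * Real.logb 2 ((∑ x, p x y c) /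
          ((∑ c', ∑ x, p x y c') * (∑ y', ∑ x, p x y' c))) := hg
      _ = ∑ y, ∑ c, (∑ x, p x y c) * Real.logb 2 ((∑ x', p x' y c) /
          ((∑ x', ∑ c', p x' y c') * (∑ x', ∑ y', p x' y' c))) := by
          refine Finset.sum_congr rfl fun y _ => Finset.sum_congr rfl fun c _ => ?_
          have e1 : (∑ c' : σ, ∑ x : α, p x y c') = ∑ x' : α, ∑ c' : σ, p x' y c' :=
            Finset.sum_comm
          have e2 : (∑ y' : β, ∑ x : α, p x y' c) = ∑ x' : α, ∑ y' : β, p x' y' c :=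
            Finset.sum_comm
          rw [e1, e2]
      _ = ∑ y, ∑ c, ∑ x, p x y c * Real.logb 2 ((∑ x', p x' y c) /
          ((∑ x', ∑ c', p x' y c') * (∑ x', ∑ y', p x' y' c))) := by
          refine Finset.sum_congr rfl fun y _ => Finset.sum_congr rfl fun c _ => ?_
          rw [Finset.sum_mul]
      _ = ∑ y, ∑ x, ∑ c, p x y c * Real.logb 2 ((∑ x', p x' y c) /
          ((∑ x', ∑ c', p x' y c') * (∑ x', ∑ y', p x' y' c))) :=
          Finset.sum_congr rfl fun y _ => Finset.sum_comm
      _ = ∑ x, ∑ y, ∑ c, p x y c * Real.logb 2 ((∑ x', p x' y c) /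
          ((∑ x', ∑ c', p x' y c') * (∑ x', ∑ y', p x' y' c))) :=
          Finset.sum_comm
  -- XY collapse
  have hXYc : ∑ x, ∑ y, (∑ c, p x y c) * Real.logb 2 ((∑ c, p x y c) /
        ((∑ y', ∑ c', p x y' c') * (∑ x', ∑ c', p x' y c')))
      = ∑ x, ∑ y, ∑ c, p x y c * Real.logb 2 ((∑ c', p x y c') /
        ((∑ y', ∑ c', p x y' c') * (∑ x', ∑ c', p x' y c'))) := by
    refine Finset.sum_congr rfl fun x _ => Finset.sum_congr rfl fun y _ => ?_
    rw [Finset.sum_mul]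
  rw [H1, H2, hXYc]
  have expand : ∑ x, ∑ y, ∑ c, p x y c * Real.logb 2 (p x y c /
        ((∑ y', ∑ c', p x y' c') * (∑ x', p x' y c)))
      = (∑ x, ∑ y, ∑ c, p x y c * Real.logb 2 ((∑ c', p x y c') /
          ((∑ y', ∑ c', p x y' c') * (∑ x', ∑ c', p x' y c'))))
        + (∑ x, ∑ y, ∑ c, p x y c * Real.logb 2 (p x y c /
          ((∑ c', p x y c') * (∑ x', ∑ y', p x' y' c))))
        - (∑ x, ∑ y, ∑ c, p x y c * Real.logb 2 ((∑ x', p x' y c) /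
          ((∑ x', ∑ c', p x' y c') * (∑ x', ∑ y', p x' y' c)))) := by
    rw [← Finset.sum_add_distrib, ← Finset.sum_sub_distrib]
    refine Finset.sum_congr rfl fun x _ => ?_
    rw [← Finset.sum_add_distrib, ← Finset.sum_sub_distrib]
    refine Finset.sum_congr rfl fun y _ => ?_
    rw [← Finset.sum_add_distrib, ← Finset.sum_sub_distrib]
    exact Finset.sum_congr rfl fun c _ => key x y c
  rw [expand]
  linarith [hYC]

lemma IXY_le_max {α β : Type*} [Fintype α] [Fintype β]
    (q : α → β → ℝ) (h0 : ∀ x y, 0 ≤ q x y) (h1 : ∑ x, ∑ y, q x y = 1)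
    (m : ℕ) (hm : 1 ≤ m)
    (hlb : ∀ x, (∑ y', q x y') ≠ 0 → 1/(m:ℝ) ≤ ∑ y', q x y')
    (d : ℝ) (hd : 0 < d)
    (D : β → ℝ) (hD0 : ∀ y, 0 ≤ D y) (hD1 : ∑ y, D y = 1)
    (hTV : ∀ x, (∑ y', q x y') ≠ 0 → (1/2) * ∑ y, |q x y / (∑ y', q x y') - D y| ≤ d) :
    ∑ x, ∑ y, q x y * Real.logb 2 (q x y / ((∑ y', q x y') * (∑ x', q x' y)))
      ≤ max 1 (Real.logb 2 m + 4 + 2 * Real.logb 2 d) := by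
  have hMr1 : (1:ℝ) ≤ (m:ℝ) := by exact_mod_cast hm
  have hMr0 : (0:ℝ) < (m:ℝ) := by linarith
  have hL0 : 0 ≤ Real.logb 2 (m:ℝ) := Real.logb_nonneg one_lt_two hMr1
  have hpX0 : ∀ x, 0 ≤ ∑ y', q x y' := fun x => Finset.sum_nonneg fun y _ => h0 x y
  have hpY0 : ∀ y, 0 ≤ ∑ x', q x' y := fun y => Finset.sum_nonneg fun x _ => h0 x y
  have hqle_pX : ∀ x y, q x y ≤ ∑ y', q x y' := fun x y =>
    Finset.single_le_sum (fun y' _ => h0 x y') (Finset.mem_univ y)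
  have hqle_pY : ∀ x y, q x y ≤ ∑ x', q x' y := fun x y =>
    Finset.single_le_sum (fun x' _ => h0 x' y) (Finset.mem_univ x)
  have hpYsum : ∑ y, ∑ x', q x' y = 1 := Finset.sum_comm.trans h1
  -- pointwise:  q ≤ m * (pX * pY)
  have hqm : ∀ x y, q x y ≤ (m:ℝ) * ((∑ y', q x y') * (∑ x', q x' y)) := by
    intro x y
    rcases eq_or_lt_of_le (h0 x y) with hq | hq
    · rw [← hq]
      exact mul_nonneg hMr0.le (mul_nonneg (hpX0 x) (hpY0 y))
    · have hxne : (∑ y', q x y') ≠ 0 := ne_of_gt (lt_of_lt_of_le hq (hqle_pX x y))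
      have h2 : 1 ≤ (m:ℝ) * (∑ y', q x y') := by
        have := hlb x hxne
        rw [div_le_iff₀ hMr0] at this
        linarith [mul_comm (∑ y', q x y') (m:ℝ) ▸ this]
      calc q x y ≤ ∑ x', q x' y := hqle_pY x y
        _ = 1 * (∑ x', q x' y) := by ring
        _ ≤ ((m:ℝ) * (∑ y', q x y')) * (∑ x', q x' y) :=
            mul_le_mul_of_nonneg_right h2 (hpY0 y)
        _ = (m:ℝ) * ((∑ y', q x y') * (∑ x', q x' y)) := by ring
  -- Bound A : S ≤ L
  have boundA : ∑ x, ∑ y, q x y * Real.logb 2 (q x y / ((∑ y', q x y') * (∑ x', q x' y)))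
      ≤ Real.logb 2 (m:ℝ) := by
    have term : ∀ x y, q x y * Real.logb 2 (q x y / ((∑ y', q x y') * (∑ x', q x' y)))
        ≤ q x y * Real.logb 2 (m:ℝ) := by
      intro x y
      rcases eq_or_lt_of_le (h0 x y) with hq | hq
      · rw [← hq, zero_mul, zero_mul]
      · have hpXpos : 0 < ∑ y', q x y' := lt_of_lt_of_le hq (hqle_pX x y)
        have hpYpos : 0 < ∑ x', q x' y := lt_of_lt_of_le hq (hqle_pY x y)
        have hratpos : 0 < q x y / ((∑ y', q x y') * (∑ x', q x' y)) := by positivity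
        have hrat : q x y / ((∑ y', q x y') * (∑ x', q x' y)) ≤ (m:ℝ) := by
          rw [div_le_iff₀ (by positivity)]
          calc q x y ≤ (m:ℝ) * ((∑ y', q x y') * (∑ x', q x' y)) := hqm x y
            _ = (m:ℝ) * ((∑ y', q x y') * (∑ x', q x' y)) := rfl
        exact mul_le_mul_of_nonneg_left
          (Real.logb_le_logb_of_le one_lt_two hratpos hrat) hq.le
    calc ∑ x, ∑ y, q x y * Real.logb 2 (q x y / ((∑ y', q x y') * (∑ x', q x' y)))
        ≤ ∑ x, ∑ y, q x y * Real.logb 2 (m:ℝ) :=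
          Finset.sum_le_sum fun x _ => Finset.sum_le_sum fun y _ => term x y
      _ = (∑ x, ∑ y, q x y) * Real.logb 2 (m:ℝ) := by
          rw [Finset.sum_mul]
          exact Finset.sum_congr rfl fun x _ => by rw [Finset.sum_mul]
      _ = Real.logb 2 (m:ℝ) := by rw [h1, one_mul]
  -- TV chain
  have perx : ∀ x, ∑ y, |q x y - (∑ y', q x y') * D y| ≤ 2*d*(∑ y', q x y') := by
    intro x
    by_cases hx : (∑ y', q x y') = 0
    · have hz : ∀ y, q x y = 0 := by
        intro y
        have := hqle_pX x y
        have := h0 x y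
        linarith [hx ▸ hqle_pX x y]
      calc ∑ y, |q x y - (∑ y', q x y') * D y| = ∑ y, (0:ℝ) :=
            Finset.sum_congr rfl fun y _ => by rw [hz y, hx]; simp
        _ = 0 := Finset.sum_const_zero
        _ ≤ 2*d*(∑ y', q x y') := by rw [hx, mul_zero]
    · have hxpos : 0 < ∑ y', q x y' := (hpX0 x).lt_of_ne (Ne.symm hx)
      have htv := hTV x hx
      have e : ∀ y, |q x y - (∑ y', q x y') * D y|
          = (∑ y', q x y') * |q x y / (∑ y', q x y') - D y| := by
        intro y
        have he : q x y - (∑ y', q x y') * D y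
            = (∑ y', q x y') * (q x y / (∑ y', q x y') - D y) := by
          field_simp
        rw [he, abs_mul, abs_of_pos hxpos]
      calc ∑ y, |q x y - (∑ y', q x y') * D y|
          = (∑ y', q x y') * ∑ y, |q x y / (∑ y', q x y') - D y| := by
            rw [Finset.mul_sum]
            exact Finset.sum_congr rfl fun y _ => e y
        _ ≤ (∑ y', q x y') * (2*d) := by
            apply mul_le_mul_of_nonneg_left _ (hpX0 x)
            linarith
        _ = 2*d*(∑ y', q x y') := by ring
  have globalD : ∑ y, |(∑ x', q x' y) - D y| ≤ 2*d := by
    have e : ∀ y, (∑ x', q x' y) - D y = ∑ x', (q x' y - (∑ y', q x' y') * D y) := by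
      intro y
      rw [Finset.sum_sub_distrib]
      congr 1
      rw [← Finset.sum_mul, h1, one_mul]
    calc ∑ y, |(∑ x', q x' y) - D y|
        ≤ ∑ y, ∑ x', |q x' y - (∑ y', q x' y') * D y| := by
          refine Finset.sum_le_sum fun y _ => ?_
          rw [e y]
          exact Finset.abs_sum_le_sum_abs _ _
      _ = ∑ x', ∑ y, |q x' y - (∑ y', q x' y') * D y| := Finset.sum_comm
      _ ≤ ∑ x', 2*d*(∑ y', q x' y') := Finset.sum_le_sum fun x _ => perx x
      _ = 2*d := by rw [← Finset.mul_sum, h1, mul_one]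
  have perx2 : ∀ x, ∑ y, |q x y - (∑ y', q x y') * (∑ x', q x' y)|
      ≤ 4*d*(∑ y', q x y') := by
    intro x
    have e : ∀ y, |q x y - (∑ y', q x y') * (∑ x', q x' y)|
        ≤ |q x y - (∑ y', q x y') * D y|
          + (∑ y', q x y') * |(∑ x', q x' y) - D y| := by
      intro y
      have h2 : q x y - (∑ y', q x y') * (∑ x', q x' y)
          = (q x y - (∑ y', q x y') * D y)
            + (∑ y', q x y') * (D y - (∑ x', q x' y)) := by ring
      calc |q x y - (∑ y', q x y') * (∑ x', q x' y)|
          = |(q x y - (∑ y', q x y') * D y)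
              + (∑ y', q x y') * (D y - (∑ x', q x' y))| := by rw [h2]
        _ ≤ |q x y - (∑ y', q x y') * D y|
              + |(∑ y', q x y') * (D y - (∑ x', q x' y))| := abs_add_le _ _
        _ = |q x y - (∑ y', q x y') * D y|
              + (∑ y', q x y') * |(∑ x', q x' y) - D y| := by
            rw [abs_mul, abs_of_nonneg (hpX0 x), abs_sub_comm (D y) (∑ x', q x' y)]
    calc ∑ y, |q x y - (∑ y', q x y') * (∑ x', q x' y)|
        ≤ ∑ y, (|q x y - (∑ y', q x y') * D y|
            + (∑ y', q x y') * |(∑ x', q x' y) - D y|) :=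
          Finset.sum_le_sum fun y _ => e y
      _ = (∑ y, |q x y - (∑ y', q x y') * D y|)
            + (∑ y', q x y') * (∑ y, |(∑ x', q x' y) - D y|) := by
          rw [Finset.sum_add_distrib, Finset.mul_sum]
      _ ≤ 2*d*(∑ y', q x y') + (∑ y', q x y') * (2*d) := by
          have := mul_le_mul_of_nonneg_left globalD (hpX0 x)
          linarith [perx x]
      _ = 4*d*(∑ y', q x y') := by ring
  have summax : ∑ x, ∑ y, max (q x y - (∑ y', q x y') * (∑ x', q x' y)) 0 ≤ 2*d := by
    have perx3 : ∀ x, ∑ y, max (q x y - (∑ y', q x y') * (∑ x', q x' y)) 0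
        ≤ 2*d*(∑ y', q x y') := by
      intro x
      have hzero : ∑ y, (q x y - (∑ y', q x y') * (∑ x', q x' y)) = 0 := by
        rw [Finset.sum_sub_distrib, ← Finset.mul_sum, hpYsum, mul_one, sub_self]
      calc ∑ y, max (q x y - (∑ y', q x y') * (∑ x', q x' y)) 0
          = ∑ y, (|q x y - (∑ y', q x y') * (∑ x', q x' y)|
              + (q x y - (∑ y', q x y') * (∑ x', q x' y))) / 2 :=
            Finset.sum_congr rfl fun y _ => max_eq_half
        _ = ((∑ y, |q x y - (∑ y', q x y') * (∑ x', q x' y)|)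
              + ∑ y, (q x y - (∑ y', q x y') * (∑ x', q x' y))) / 2 := by
            rw [← Finset.sum_div, Finset.sum_add_distrib]
        _ = (∑ y, |q x y - (∑ y', q x y') * (∑ x', q x' y)|) / 2 := by
            rw [hzero, add_zero]
        _ ≤ (4*d*(∑ y', q x y')) / 2 := by
            have := perx2 x; linarith
        _ = 2*d*(∑ y', q x y') := by ring
    calc ∑ x, ∑ y, max (q x y - (∑ y', q x y') * (∑ x', q x' y)) 0
        ≤ ∑ x, 2*d*(∑ y', q x y') := Finset.sum_le_sum fun x _ => perx3 x
      _ = 2*d := by rw [← Finset.mul_sum, h1, mul_one]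
  -- Bound B (m ≥ 2)
  have boundB : 2 ≤ (m:ℝ) →
      ∑ x, ∑ y, q x y * Real.logb 2 (q x y / ((∑ y', q x y') * (∑ x', q x' y)))
        ≤ ((m:ℝ) * Real.logb 2 (m:ℝ) / ((m:ℝ) - 1)) * (2*d) := by
    intro hm2
    have hcoef : 0 ≤ (m:ℝ) * Real.logb 2 (m:ℝ) / ((m:ℝ) - 1) := by
      apply div_nonneg (mul_nonneg (by linarith) hL0) (by linarith)
    calc ∑ x, ∑ y, q x y * Real.logb 2 (q x y / ((∑ y', q x y') * (∑ x', q x' y)))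
        ≤ ∑ x, ∑ y, ((m:ℝ) * Real.logb 2 (m:ℝ) / ((m:ℝ) - 1))
            * max (q x y - (∑ y', q x y') * (∑ x', q x' y)) 0 := by
          refine Finset.sum_le_sum fun x _ => Finset.sum_le_sum fun y _ => ?_
          exact chord (m:ℝ) (q x y) ((∑ y', q x y') * (∑ x', q x' y)) hm2 (h0 x y)
            (mul_nonneg (hpX0 x) (hpY0 y)) (hqm x y)
      _ = ((m:ℝ) * Real.logb 2 (m:ℝ) / ((m:ℝ) - 1))
            * ∑ x, ∑ y, max (q x y - (∑ y', q x y') * (∑ x', q x' y)) 0 := by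
          rw [Finset.mul_sum]
          exact Finset.sum_congr rfl fun x _ => by rw [Finset.mul_sum]
      _ ≤ ((m:ℝ) * Real.logb 2 (m:ℝ) / ((m:ℝ) - 1)) * (2*d) :=
          mul_le_mul_of_nonneg_left summax hcoef
  -- case analysis
  rcases le_or_gt (1/4 : ℝ) d with hd4 | hd4
  · -- d ≥ 1/4
    have hld : Real.logb 2 (1/4 : ℝ) ≤ Real.logb 2 d :=
      Real.logb_le_logb_of_le one_lt_two (by norm_num) hd4
    have e2 : Real.logb 2 (1/4 : ℝ) = -2 := by
      rw [one_div, Real.logb_inv, logb_two_four]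
    refine le_max_of_le_right ?_
    calc ∑ x, ∑ y, q x y * Real.logb 2 (q x y / ((∑ y', q x y') * (∑ x', q x' y)))
        ≤ Real.logb 2 (m:ℝ) := boundA
      _ ≤ Real.logb 2 (m:ℝ) + 4 + 2 * Real.logb 2 d := by
          rw [e2] at hld; linarith
  · rcases le_or_gt m 2 with hm2 | hm3
    · -- m ≤ 2 : S ≤ L ≤ 1
      refine le_max_of_le_left ?_
      refine boundA.trans ?_
      calc Real.logb 2 (m:ℝ) ≤ Real.logb 2 (2:ℝ) := by
            apply Real.logb_le_logb_of_le one_lt_two hMr0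
            exact_mod_cast hm2
        _ = 1 := Real.logb_self_eq_one one_lt_two
  -- m ≥ 3
    · have hm3' : 3 ≤ m := hm3
      have hMr3 : (3:ℝ) ≤ (m:ℝ) := by exact_mod_cast hm3'
      have hMr2 : (2:ℝ) ≤ (m:ℝ) := by linarith
      have hSc : ∑ x, ∑ y, q x y * Real.logb 2 (q x y / ((∑ y', q x y') * (∑ x', q x' y)))
          ≤ (2 * (m:ℝ) * Real.logb 2 (m:ℝ) / ((m:ℝ) - 1)) * d := by
        refine (boundB hMr2).trans (le_of_eq ?_)
        ring
      set c := 2 * (m:ℝ) * Real.logb 2 (m:ℝ) / ((m:ℝ) - 1) with hc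
      by_cases hcd : c * d ≤ 1
      · exact le_max_of_le_left (hSc.trans hcd)
      · push_neg at hcd
        have hB : c ≤ 4 * Real.logb 2 (m:ℝ) := by
          rw [hc, div_le_iff₀ (by linarith : (0:ℝ) < (m:ℝ) - 1)]
          nlinarith [hL0, hMr2]
        have hA : 1 + 2 * Real.logb 2 c ≤ Real.logb 2 (m:ℝ) + 4 := by
          rcases lt_or_ge m 5 with h5 | h5
          · interval_cases m
            · -- m = 3
              have hMr : ((3:ℕ):ℝ) = 3 := by norm_num
              rw [hc, hMr]
              have ht : 0 < Real.logb 2 3 := Real.logb_pos one_lt_two (by norm_num)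
              have hcc : (2 * 3 * Real.logb 2 3 / (3 - 1) : ℝ) = 3 * Real.logb 2 3 := by
                ring
              rw [hcc, Real.logb_mul (by norm_num) (ne_of_gt ht)]
              have := m3_cond
              linarith
            · -- m = 4
              have hMr : ((4:ℕ):ℝ) = 4 := by norm_num
              rw [hc, hMr, logb_two_four]
              have hcc : (2 * 4 * 2 / (4 - 1) : ℝ) = 16/3 := by norm_num
              rw [hcc]
              have h163 : Real.logb 2 (16/3 : ℝ) = 4 - Real.logb 2 3 := by
                rw [Real.logb_div (by norm_num) (by norm_num)]
                congr 1
                rw [show (16:ℝ) = 2^(4:ℕ) by norm_num, Real.logb_pow,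
                  Real.logb_self_eq_one one_lt_two]
                norm_num
              rw [h163]
              have h32 : (3:ℝ)/2 ≤ Real.logb 2 3 := by
                rw [Real.logb, le_div_iff₀ (Real.log_pos one_lt_two)]
                have h98 : 0 ≤ Real.log (9/8 : ℝ) := Real.log_nonneg (by norm_num)
                have hid : Real.log (9/8 : ℝ) = 2 * Real.log 3 - 3 * Real.log 2 := by
                  rw [show (9/8:ℝ) = 3^(2:ℕ)/2^(3:ℕ) by norm_num,
                    Real.log_div (by norm_num) (by norm_num), Real.log_pow, Real.log_pow]
                  push_cast; ring
                nlinarith [hid ▸ h98]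
              linarith
          · -- m ≥ 5
            have hMr5 : (5:ℝ) ≤ (m:ℝ) := by exact_mod_cast h5
            have hLpos : 0 < Real.logb 2 (m:ℝ) := Real.logb_pos one_lt_two (by linarith)
            have hcpos : 0 < c := by
              rcases le_or_gt c 0 with h | h
              · exfalso; nlinarith [hcd]
              · exact h
            have hc5 : c ≤ 5/2 * Real.logb 2 (m:ℝ) := by
              rw [hc, div_le_iff₀ (by linarith : (0:ℝ) < (m:ℝ) - 1)]
              nlinarith [hLpos.le, hMr5]
            linarith [m5_cond hLpos hcpos hc5]
        have := concave_endpoint hd hd4.le hcd hA hB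
        exact le_max_of_le_right (hSc.trans this)

/-- Let `(X,Y,C)` be jointly distributed on finite sets with joint
pmf `p`, where the marginal of `X` is uniform over a multiset of at most
`2⁹·n/γ³` elements. If (i) there is a fixed probability distribution `D` with
`Δ(P_{Y|X=x}, D) ≤ d` for all `x ∈ supp X`, and (ii) `I((X,Y); C) ≤ h`, then
`I(X; (Y,C)) ≤ max{1 + h, 13 + h + log₂(n·d²/γ³)}` (bits). -/
theorem stmt_14 (n : ℕ) (hn : 0 < n) (γ d h : ℝ) (hγ : 0 < γ) (hd : 0 < d) (hh : 0 ≤ h)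
    {α β σ : Type*} [Fintype α] [DecidableEq α] [Fintype β] [Fintype σ]
    (p : α → β → σ → ℝ) (hp0 : ∀ x y c, 0 ≤ p x y c)
    (hp1 : ∑ x, ∑ y, ∑ c, p x y c = 1)
    (hX : ∃ K : Multiset α, K ≠ 0 ∧
      (Multiset.card K : ℝ) ≤ 2 ^ 9 * (n : ℝ) / γ ^ 3 ∧
      ∀ x, (∑ y, ∑ c, p x y c) = (K.count x : ℝ) / (Multiset.card K : ℝ))
    (hD : ∃ D : β → ℝ, (∀ y, 0 ≤ D y) ∧ (∑ y, D y = 1) ∧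
      ∀ x, (∑ y, ∑ c, p x y c) ≠ 0 →
        (1 / 2) * ∑ y, |(∑ c, p x y c) / (∑ y', ∑ c, p x y' c) - D y| ≤ d)
    (hC : mutualInfo (fun (xy : α × β) c => p xy.1 xy.2 c) ≤ h) :
    mutualInfo (fun x (yc : β × σ) => p x yc.1 yc.2)
      ≤ max (1 + h) (13 + h + Real.logb 2 ((n : ℝ) * d ^ 2 / γ ^ 3)) := by
  obtain ⟨K, hK0, hKle, hKuni⟩ := hX
  obtain ⟨D, hD0, hD1, hDtv⟩ := hD
  set m := Multiset.card K with hmdef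
  have hm : 1 ≤ m := Nat.succ_le_of_lt (Multiset.card_pos.mpr hK0)
  have hMpos : (0:ℝ) < (m:ℝ) := by exact_mod_cast Nat.lt_of_lt_of_le Nat.zero_lt_one hm
  have hlb : ∀ x, (∑ y', ∑ c, p x y' c) ≠ 0 → 1/(m:ℝ) ≤ ∑ y', ∑ c, p x y' c := by
    intro x hx
    rw [hKuni x] at hx ⊢
    have hcne : (K.count x : ℝ) ≠ 0 := by
      intro hzero
      exact hx (by rw [hzero, zero_div])
    have hc1 : (1:ℝ) ≤ (K.count x : ℝ) := by
      have : 1 ≤ K.count x := Nat.one_le_iff_ne_zero.mpr (by exact_mod_cast hcne)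
      exact_mod_cast this
    gcongr
  have hS := IXY_le_max (fun x y => ∑ c, p x y c) (fun x y => Finset.sum_nonneg fun c _ => hp0 x y c)
    hp1 m hm hlb d hd D hD0 hD1 hDtv
  have hdec := decomp p hp0 hp1
  -- key numeric comparison
  have hnpos : (0:ℝ) < (n:ℝ) := by exact_mod_cast hn
  have hnne : (n:ℝ) ≠ 0 := ne_of_gt hnpos
  have hγ3 : (0:ℝ) < γ^3 := by positivity
  have hkey : Real.logb 2 (m:ℝ) + 4 + 2 * Real.logb 2 d
      ≤ 13 + Real.logb 2 ((n:ℝ) * d^2 / γ^3) := by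
    have hmono : Real.logb 2 (m:ℝ) ≤ Real.logb 2 (2^9 * (n:ℝ) / γ^3) :=
      Real.logb_le_logb_of_le one_lt_two hMpos hKle
    have e1 : Real.logb 2 (2^9 * (n:ℝ) / γ^3)
        = 9 + Real.logb 2 (n:ℝ) - 3 * Real.logb 2 γ := by
      rw [Real.logb_div (by positivity) (ne_of_gt hγ3),
        Real.logb_mul (by norm_num) hnne, Real.logb_pow, Real.logb_pow,
        Real.logb_self_eq_one one_lt_two]
      push_cast; ring
    have e2 : Real.logb 2 ((n:ℝ) * d^2 / γ^3)
        = Real.logb 2 (n:ℝ) + 2 * Real.logb 2 d - 3 * Real.logb 2 γ := by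
      rw [Real.logb_div (by positivity) (ne_of_gt hγ3),
        Real.logb_mul hnne (by positivity), Real.logb_pow, Real.logb_pow]
      push_cast; ring
    rw [e2]
    rw [e1] at hmono
    linarith
  have hfinal : max 1 (Real.logb 2 (m:ℝ) + 4 + 2 * Real.logb 2 d) + h
      ≤ max (1 + h) (13 + h + Real.logb 2 ((n:ℝ) * d^2 / γ^3)) := by
    rcases le_total (1:ℝ) (Real.logb 2 (m:ℝ) + 4 + 2 * Real.logb 2 d) with hc | hc
    · rw [max_eq_right hc]
      exact le_max_of_le_right (by linarith)
    · rw [max_eq_left hc]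
      exact le_max_of_le_left (by linarith)
  calc mutualInfo (fun x (yc : β × σ) => p x yc.1 yc.2)
      ≤ (∑ x, ∑ y, (∑ c, p x y c) * Real.logb 2 ((∑ c, p x y c) /
          ((∑ y', ∑ c', p x y' c') * (∑ x', ∑ c', p x' y c'))))
        + mutualInfo (fun (xy : α × β) c => p xy.1 xy.2 c) := hdec
    _ ≤ max 1 (Real.logb 2 (m:ℝ) + 4 + 2 * Real.logb 2 d) + h := by
        have : (∑ x, ∑ y, (∑ c, p x y c) * Real.logb 2 ((∑ c, p x y c) /
            ((∑ y', ∑ c', p x y' c') * (∑ x', ∑ c', p x' y c'))))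
            ≤ max 1 (Real.logb 2 (m:ℝ) + 4 + 2 * Real.logb 2 d) := hS
        linarith [hC]
    _ ≤ max (1 + h) (13 + h + Real.logb 2 ((n:ℝ) * d^2 / γ^3)) := hfinal
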